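/- For q-pebbling on the path P_n with n ≥ 1 vertices, the pebbling number is q^{n-1}: every configuration of q^{n-1} pebbles on P_n is solvable, and placing q^{n-1} - 1 pebbles on one endpoint is not solvable (it cannot reach the other endpoint) when n ≥ 2. -/

import Mathlib

/-- A `q`-pebbling move: remove `q` pebbles from a vertex `u` (which has at least `q`
pebbles) and add one pebble to a neighbour `u'`. -/
def PebStep {V : Type*} [DecidableEq V] (q : ℕ) (G : SimpleGraph V) (D D' : V → ℕ) : Prop :=
  ∃ u u', G.Adj u u' ∧ q ≤ D u ∧
    D' = fun w => if w = u then D u - q else if w = u' then D u' + 1 else D w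

/-- A configuration `D` is `v`-solvable if a finite sequence of `q`-pebbling moves
places a pebble on `v`. -/
def Solvable {V : Type*} [DecidableEq V] (q : ℕ) (G : SimpleGraph V) (D : V → ℕ) (v : V) : Prop :=
  ∃ D', Relation.ReflTransGen (PebStep q G) D D' ∧ 1 ≤ D' v

/-!
Upper bound: `q ^ k` pebbles on the vertices `0, …, k` can be pushed greedily to put a pebble
on `k`, and by the reflection `i ↦ n - 1 - i` the same holds from the right. If the target `v`
is reached from neither side, the two sides together hold at most
`(q ^ v - 1) + (q ^ (n - 1 - v) - 1) < q ^ v * q ^ (n - 1 - v)` pebbles.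

Lower bound: the potential `∑ w, D w * q ^ w` never increases under a move, and a pebble on
the last vertex alone has potential `q ^ (n - 1)`.
-/

open SimpleGraph Finset

section General

variable {V : Type*} [DecidableEq V] {q : ℕ} {G : SimpleGraph V}

lemma PebStep.map {W : Type*} [DecidableEq W] {H : SimpleGraph W} (e : G ≃g H) {D D' : V → ℕ}
    (h : PebStep q G D D') : PebStep q H (D ∘ e.symm) (D' ∘ e.symm) := by
  obtain ⟨u, u', hadj, hqu, rfl⟩ := h
  refine ⟨e u, e u', e.map_adj_iff.mpr hadj, by simpa using hqu, ?_⟩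
  funext w
  simp only [Function.comp_apply, e.symm_apply_eq, RelIso.symm_apply_apply]

lemma Solvable.map {W : Type*} [DecidableEq W] {H : SimpleGraph W} (e : G ≃g H) {D : V → ℕ}
    {v : V} (h : Solvable q G D v) : Solvable q H (D ∘ e.symm) (e v) := by
  obtain ⟨D', hD', hv⟩ := h
  exact ⟨D' ∘ e.symm, hD'.lift (· ∘ e.symm) (fun _ _ => PebStep.map e), by simpa using hv⟩

lemma exists_reflTransGen_pebStep_repeat {u u' : V} (h : G.Adj u u') (t : ℕ) {D : V → ℕ}
    (hD : t * q ≤ D u) :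
    ∃ E, Relation.ReflTransGen (PebStep q G) D E ∧ E u' = D u' + t ∧
      ∀ w, w ≠ u → w ≠ u' → E w = D w := by
  induction t generalizing D with
  | zero => exact ⟨D, .refl, rfl, fun _ _ _ => rfl⟩
  | succ t ih =>
    rw [Nat.succ_mul] at hD
    set D₁ : V → ℕ := fun w => if w = u then D u - q else if w = u' then D u' + 1 else D w
    have hstep : PebStep q G D D₁ := ⟨u, u', h, by omega, rfl⟩
    have hD₁ : t * q ≤ D₁ u := by simp only [D₁, if_true]; omega
    obtain ⟨E, hE, hEu', hEw⟩ := ih hD₁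
    refine ⟨E, .head hstep hE, by simp [hEu', D₁, h.ne']; ring, fun w hw hw' => ?_⟩
    simp [hEw w hw hw', D₁, hw, hw']

variable [Fintype V] {f : V → ℕ}

lemma PebStep.sum_mul_le (hf : ∀ u u', G.Adj u u' → f u' ≤ q * f u) {D D' : V → ℕ}
    (h : PebStep q G D D') : ∑ w, D' w * f w ≤ ∑ w, D w * f w := by
  obtain ⟨u, u', hadj, hqu, rfl⟩ := h
  have hterm : ∀ w, (if w = u then D u - q else if w = u' then D u' + 1 else D w) * f w +
      (if w = u then q * f u else 0) = D w * f w + if w = u' then f u' else 0 := by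
    intro w
    by_cases hwu : w = u
    · subst hwu
      simp only [if_true, if_neg hadj.ne, add_zero, ← add_mul, Nat.sub_add_cancel hqu]
    · by_cases hwu' : w = u'
      · subst hwu'
        simp [hadj.ne', add_mul]
      · simp [hwu, hwu']
  have hsum := sum_congr rfl (fun w (_ : w ∈ univ) => hterm w)
  simp only [sum_add_distrib, sum_ite_eq', mem_univ, if_true] at hsum
  have := hf u u' hadj
  beta_reduce
  omega

lemma sum_mul_le_of_reflTransGen (hf : ∀ u u', G.Adj u u' → f u' ≤ q * f u) {D D' : V → ℕ}
    (h : Relation.ReflTransGen (PebStep q G) D D') : ∑ w, D' w * f w ≤ ∑ w, D w * f w := by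
  induction h with
  | refl => exact le_rfl
  | tail _ hstep ih => exact (hstep.sum_mul_le hf).trans ih

lemma not_solvable_of_sum_mul_lt (hf : ∀ u u', G.Adj u u' → f u' ≤ q * f u) {D : V → ℕ}
    {v : V} (hD : ∑ w, D w * f w < f v) : ¬ Solvable q G D v := by
  rintro ⟨D', hD', hv⟩
  have hle : D' v * f v ≤ ∑ w, D' w * f w :=
    single_le_sum (f := fun w => D' w * f w) (fun _ _ => Nat.zero_le _) (mem_univ v)
  have := sum_mul_le_of_reflTransGen hf hD'
  nlinarith

end General

namespace SimpleGraph

def pathGraphRevIso (n : ℕ) : pathGraph n ≃g pathGraph n where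
  toEquiv := Fin.revPerm
  map_rel_iff' := by
    intro u v
    simp only [pathGraph_adj, Fin.revPerm_apply, Fin.val_rev]
    omega

end SimpleGraph

variable {n q : ℕ}

lemma Fin.Iic_succ_eq_insert {k : ℕ} (hk : k + 1 < n) :
    Iic (⟨k + 1, hk⟩ : Fin n) = insert ⟨k + 1, hk⟩ (Iic ⟨k, by omega⟩) := by
  ext i
  simp only [mem_Iic, mem_insert, Fin.le_def, Fin.ext_iff]
  omega

lemma exists_pathGraph_le_of_mul_pow_le_sum_Iic (hq : 1 ≤ q) (D : Fin n → ℕ) (m k : ℕ)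
    (hk : k < n) (hD : m * q ^ k ≤ ∑ i ∈ Iic (⟨k, hk⟩ : Fin n), D i) :
    ∃ E, Relation.ReflTransGen (PebStep q (pathGraph n)) D E ∧ m ≤ E ⟨k, hk⟩ ∧
      ∀ j : Fin n, k < j → E j = D j := by
  induction k generalizing m with
  | zero =>
    refine ⟨D, .refl, ?_, fun _ _ => rfl⟩
    have : Iic (⟨0, hk⟩ : Fin n) = {⟨0, hk⟩} := by
      ext i; simp [Fin.le_def, Fin.ext_iff]
    simpa [this] using hD
  | succ k ih =>
    set d := D ⟨k + 1, hk⟩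
    by_cases hm : m ≤ d
    · exact ⟨D, .refl, hm, fun _ _ => rfl⟩
    rw [Fin.Iic_succ_eq_insert hk, sum_insert (by simp [Fin.le_def])] at hD
    have hpow : 1 ≤ q ^ (k + 1) := Nat.one_le_pow _ _ hq
    have hleft : (m - d) * q * q ^ k ≤ ∑ i ∈ Iic (⟨k, by omega⟩ : Fin n), D i := by
      rw [mul_assoc, ← pow_succ', Nat.sub_mul]
      have : d ≤ d * q ^ (k + 1) := Nat.le_mul_of_pos_right d hpow
      omega
    obtain ⟨E₁, hE₁, hE₁k, hE₁right⟩ := ih ((m - d) * q) (by omega) hleft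
    have hadj : (pathGraph n).Adj ⟨k, by omega⟩ ⟨k + 1, hk⟩ := pathGraph_adj.mpr (.inl rfl)
    obtain ⟨E₂, hE₂, hE₂k, hE₂other⟩ :=
      exists_reflTransGen_pebStep_repeat hadj (m - d) hE₁k
    refine ⟨E₂, hE₁.trans hE₂, ?_, fun j hj => ?_⟩
    · rw [hE₂k, hE₁right _ (by simp)]
      omega
    · rw [hE₂other j (by simp [Fin.ext_iff]; omega) (by simp [Fin.ext_iff]; omega)]
      exact hE₁right j (by omega)

lemma solvable_pathGraph_of_pow_le_sum_Iic (hq : 1 ≤ q) {D : Fin n → ℕ} {v : Fin n}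
    (hD : q ^ (v : ℕ) ≤ ∑ i ∈ Iic v, D i) : Solvable q (pathGraph n) D v := by
  obtain ⟨k, hk⟩ := v
  obtain ⟨E, hE, hEk, -⟩ :=
    exists_pathGraph_le_of_mul_pow_le_sum_Iic hq D 1 k hk (by simpa using hD)
  exact ⟨E, hE, hEk⟩

lemma solvable_pathGraph_of_pow_le_sum (hq : 1 ≤ q) {D : Fin n → ℕ}
    (hD : q ^ (n - 1) ≤ ∑ w, D w) (v : Fin n) : Solvable q (pathGraph n) D v := by
  by_cases hleft : q ^ (v : ℕ) ≤ ∑ i ∈ Iic v, D i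
  · exact solvable_pathGraph_of_pow_le_sum_Iic hq hleft
  by_cases hright : q ^ (n - 1 - v) ≤ ∑ i ∈ Ici v, D i
  · have hrev : Solvable q (pathGraph n) (D ∘ Fin.rev) v.rev := by
      refine solvable_pathGraph_of_pow_le_sum_Iic hq ?_
      rw [Fin.val_rev, ← Fin.map_revPerm_Ici, sum_map, show n - (v + 1) = n - 1 - v by omega]
      simpa using hright
    have hDrev : (D ∘ Fin.rev) ∘ Fin.revPerm = D := by funext; simp
    simpa [pathGraphRevIso, hDrev] using hrev.map (pathGraphRevIso n)
  have hsplit : ∑ w, D w ≤ ∑ i ∈ Iic v, D i + ∑ i ∈ Ici v, D i := by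
    rw [← sum_union_inter, show Iic v ∪ Ici v = univ from
      eq_univ_of_forall fun i => by simpa using le_total i v]
    exact Nat.le_add_right _ _
  have hpow : q ^ (v : ℕ) * q ^ (n - 1 - v) = q ^ (n - 1) := by
    rw [← pow_add]; congr 1; omega
  have := Nat.one_le_pow (v : ℕ) q hq
  have := Nat.one_le_pow (n - 1 - v) q hq
  nlinarith

lemma not_solvable_pathGraph_of_sum_mul_pow_lt (hq : 1 ≤ q) {D : Fin n → ℕ} {v : Fin n}
    (hD : ∑ w, D w * q ^ (w : ℕ) < q ^ (v : ℕ)) : ¬ Solvable q (pathGraph n) D v := by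
  refine not_solvable_of_sum_mul_lt (fun u u' hadj => ?_) hD
  rw [← pow_succ']
  exact Nat.pow_le_pow_right hq (by rw [pathGraph_adj] at hadj; omega)

/-- the `q`-pebbling number of the path on `n` vertices is `q^{n-1}`:
every configuration of `q^{n-1}` pebbles is solvable, and for `n ≥ 2` the pile of
`q^{n-1} - 1` pebbles on one endpoint cannot reach the other endpoint. -/
theorem stmt9 (n : ℕ) (hn : 1 ≤ n) (q : ℕ) (hq : 2 ≤ q) :
    (∀ D : Fin n → ℕ, (∑ w, D w) = q ^ (n - 1) →
        ∀ v, Solvable q (SimpleGraph.pathGraph n) D v) ∧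
    (2 ≤ n →
      ¬ Solvable q (SimpleGraph.pathGraph n)
          (fun i => if i = (⟨0, by omega⟩ : Fin n) then q ^ (n - 1) - 1 else 0)
          (⟨n - 1, by omega⟩ : Fin n)) := by
  refine ⟨fun D hD => solvable_pathGraph_of_pow_le_sum (by omega) hD.ge, fun _ => ?_⟩
  apply not_solvable_pathGraph_of_sum_mul_pow_lt (by omega)
  have := Nat.one_le_pow (n - 1) q (by omega)
  simp only [ite_mul, zero_mul, sum_ite_eq', mem_univ, if_true, pow_zero, mul_one]
  omega
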